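/- Let λ, μ be partitions of length m with |λ| ≥ |μ| and let k be an integer with k ≥ (|λ|−|μ|)/2. Then for each type g ∈ {B_m, C_m, D_m}: K^g_{λ+kκ_m, μ+kκ_m}(q) = Σ_{σ∈S_m} (−1)^{l(σ)} P_q^g(σ(λ+ρ_g) − (μ+ρ_g)), where the sum runs only over the symmetric group S_m ⊂ W_g. -/

import Mathlib

open scoped BigOperators

noncomputable section

/-- Integral weights of rank `m`, identified with `ℤ^m`. -/
abbrev Wt (m : ℕ) := Fin m → ℤ

/-- Rational weights of rank `m` (needed for the half-integral `ρ` of type `B`). -/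
abbrev QWt (m : ℕ) := Fin m → ℚ

/-- Coercion of an integral weight to a rational weight. -/
def castWt {m : ℕ} (β : Wt m) : QWt m := fun i => (β i : ℚ)

/-- The standard basis vector `ε_i` of `ℤ^m`. -/
def eps {m : ℕ} (i : Fin m) : Wt m := fun j => if j = i then 1 else 0

/-- `ρ_m = (m, m-1, ..., 1)`. -/
def rhoZ (m : ℕ) : Wt m := fun i => (m : ℤ) - (i : ℕ)

/-- `κ_m = (1, ..., 1)`. -/
def kappa (m : ℕ) : Wt m := fun _ => 1

/-- A partition of length `m`: a weakly decreasing element of `ℕ^m` (written in `ℤ^m`). -/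
def IsPart {m : ℕ} (lam : Wt m) : Prop := Antitone lam ∧ ∀ i, 0 ≤ lam i

/-- `|λ| = λ_1 + ⋯ + λ_m`. -/
def wtSum {m : ℕ} (lam : Wt m) : ℤ := ∑ i, lam i

/-- The conjugate partition, regarded as a partition of length `n`:
`λ'_j = #{i : λ_i ≥ j}` (with `j` one-based). -/
def conj {m : ℕ} (n : ℕ) (lam : Wt m) : Wt n :=
  fun j => ((Finset.univ.filter (fun i : Fin m => ((j : ℕ) : ℤ) < lam i)).card : ℤ)

/-- The permutation action of `S_m` on `ℤ^m`. -/
def pact {m : ℕ} (σ : Equiv.Perm (Fin m)) (β : Wt m) : Wt m := β ∘ σ.symm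

/-- The permutation action of `S_m` on `ℚ^m`. -/
def qpact {m : ℕ} (σ : Equiv.Perm (Fin m)) (β : QWt m) : QWt m := β ∘ σ.symm

/-- The dot action `σ ∘ α = σ(α + ρ_m) - ρ_m`. -/
def dotAct {m : ℕ} (σ : Equiv.Perm (Fin m)) (α : Wt m) : Wt m :=
  pact σ (α + rhoZ m) - rhoZ m

/-- The three root-system types considered in the paper. -/
inductive RT | B | C | D
deriving DecidableEq

/-- The action of a signed permutation `(σ, ε)` on `ℚ^m`: the hyperoctahedral group
`W_{B_m} = W_{C_m}` consists of all such pairs. -/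
def sact {m : ℕ} (σ : Equiv.Perm (Fin m)) (ε : Fin m → Bool) (β : QWt m) : QWt m :=
  fun i => (if ε i then -1 else 1) * β (σ.symm i)

/-- `(-1)^{l(w)}` for a signed permutation `w = (σ, ε)`: the sign character of the
hyperoctahedral group, which takes value `-1` on each Coxeter generator. -/
def ssign {m : ℕ} (σ : Equiv.Perm (Fin m)) (ε : Fin m → Bool) : ℤ :=
  (Equiv.Perm.sign σ : ℤ) * ∏ i, (if ε i then -1 else 1)

/-- Which signed permutations belong to the Weyl group of type `g`: for `B` and `C` all of
them, for `D` only those changing an even number of signs. -/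
def allowed (g : RT) {m : ℕ} (ε : Fin m → Bool) : Prop :=
  g = RT.D → (∏ i, (if ε i then (-1 : ℤ) else 1)) = 1

instance (g : RT) {m : ℕ} : DecidablePred (allowed g (m := m)) := by
  unfold allowed; infer_instance

/-- The Laurent polynomial ring `ℤ[x_1^{±1/2}, ..., x_m^{±1/2}]` (allowing all rational
exponents), realized as the group algebra of `ℚ^m`. -/
abbrev LQ (m : ℕ) := AddMonoidAlgebra ℤ (QWt m)

/-- The monomial `x^β`. -/
def XQ {m : ℕ} (β : QWt m) : LQ m := AddMonoidAlgebra.single β 1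

instance {m : ℕ} : IsDomain (LQ m) := NoZeroDivisors.to_isDomain _

/-- The fraction field of the Laurent polynomial ring, in which Schur functions live. -/
abbrev KK (m : ℕ) := FractionRing (LQ m)

def toK {m : ℕ} (p : LQ m) : KK m := algebraMap (LQ m) (KK m) p

/-- The half-sum of positive roots: `ρ_B = ρ_m - (1/2,…,1/2)`, `ρ_C = ρ_m`,
`ρ_D = ρ_m - (1,…,1)`. -/
def rhoG (g : RT) (m : ℕ) : QWt m :=
  match g with
  | RT.B => fun i => ((m : ℚ) - (i : ℕ)) - 1/2
  | RT.C => fun i => (m : ℚ) - (i : ℕ)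
  | RT.D => fun i => ((m : ℚ) - (i : ℕ)) - 1

/-- `a_β = Σ_{w ∈ W_g} (-1)^{l(w)} x^{w(β)}`. -/
def aalt (g : RT) {m : ℕ} (β : QWt m) : LQ m :=
  ∑ σ : Equiv.Perm (Fin m), ∑ ε ∈ Finset.univ.filter (allowed g),
    ssign σ ε • XQ (sact σ ε β)

/-- The Schur function `s_ν^g = a_{ν+ρ_g} / a_{ρ_g}`. -/
def SchurF (g : RT) {m : ℕ} (ν : QWt m) : KK m :=
  toK (aalt g (ν + rhoG g m)) / toK (aalt g (rhoG g m))

/-- The one-row weight `(k, 0, …, 0)`. -/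
def rowWt (m : ℕ) (k : ℤ) : QWt m := fun i => if (i : ℕ) = 0 then (k : ℚ) else 0

/-- The one-column weight `(1^p, 0^{m-p})`. -/
def colWt (m : ℕ) (p : ℤ) : QWt m := fun i => if ((i : ℕ) : ℤ) < p then 1 else 0

/-- `h_k^g = s_{(k,0,…,0)}^g` for `k ≥ 0`, and `0` for `k < 0`. -/
def hF (g : RT) (m : ℕ) (k : ℤ) : KK m := if 0 ≤ k then SchurF g (rowWt m k) else 0

/-- `H_k^g = h_k^g + h_{k-2}^g + ⋯ + h_{k mod 2}^g` for `k ≥ 0`, and `0` for `k < 0`. -/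
def HF (g : RT) (m : ℕ) (k : ℤ) : KK m :=
  if 0 ≤ k then ∑ j ∈ Finset.range (k.toNat / 2 + 1), hF g m (k - 2 * j) else 0

/-- `e_p^g = s^g_{(1^p,0^{m-p})}` for `0 ≤ p ≤ m`, `e_p^g = e^g_{2m-p}` for `m < p ≤ 2m`,
and `0` otherwise. -/
def eF (g : RT) (m : ℕ) (p : ℤ) : KK m :=
  if 0 ≤ p ∧ p ≤ (m : ℤ) then SchurF g (colWt m p)
  else if (m : ℤ) < p ∧ p ≤ 2 * m then SchurF g (colWt m (2 * m - p))
  else 0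

/-- `E_k^g = e_k^g + e_{k-2}^g + ⋯ + e_{k mod 2}^g` for `k ≥ 0`, and `0` for `k < 0`. -/
def EF (g : RT) (m : ℕ) (k : ℤ) : KK m :=
  if 0 ≤ k then ∑ j ∈ Finset.range (k.toNat / 2 + 1), eF g m (k - 2 * j) else 0

/-- The `m × m` determinant `u_α^g` (in the one-row characters `h^g`). -/
def uDet (g : RT) {m : ℕ} (α : Wt m) : KK m :=
  Matrix.det (Matrix.of fun i j : Fin m =>
    if (j : ℕ) = 0 then hF g m (α i - (i : ℕ))
    else hF g m (α i - (i : ℕ) + (j : ℕ)) + hF g m (α i - (i : ℕ) - (j : ℕ)))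

/-- The `n × n` determinant `v_β^g` (in the one-column characters `e^g` of rank `m`). -/
def vDet (g : RT) (m : ℕ) {n : ℕ} (β : Wt n) : KK m :=
  Matrix.det (Matrix.of fun i j : Fin n =>
    if (j : ℕ) = 0 then eF g m (β i - (i : ℕ))
    else eF g m (β i - (i : ℕ) + (j : ℕ)) + eF g m (β i - (i : ℕ) - (j : ℕ)))

/-- `h_α^g = h^g_{α_1} ⋯ h^g_{α_m}` (and similarly for arbitrary index length). -/
def hProd (g : RT) (m : ℕ) {n : ℕ} (α : Wt n) : KK m := ∏ i, hF g m (α i)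

def HProd (g : RT) (m : ℕ) {n : ℕ} (α : Wt n) : KK m := ∏ i, HF g m (α i)

def eProd (g : RT) (m : ℕ) {n : ℕ} (α : Wt n) : KK m := ∏ i, eF g m (α i)

def EProd (g : RT) (m : ℕ) {n : ℕ} (α : Wt n) : KK m := ∏ i, EF g m (α i)

/-- The Laurent polynomial ring `ℤ[x_1^{±1}, ..., x_m^{±1}]`, realized as the group
algebra of `ℤ^m`. -/
abbrev LZ (m : ℕ) := AddMonoidAlgebra ℤ (Wt m)

/-- The monomial `x^β`. -/
def XZ {m : ℕ} (β : Wt m) : LZ m := AddMonoidAlgebra.single β 1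

/-- `φ_m = ∏_{1≤i<j≤m} (1 - x_i/x_j) · ∏_{1≤r<s≤m} (1 - 1/(x_r x_s))`; its coefficients
are the function `a` (resp. `f_{q=1}` up to expansion conventions). -/
def phiSmall (m : ℕ) : LZ m :=
  (∏ p ∈ Finset.univ.filter (fun p : Fin m × Fin m => p.1 < p.2),
      (1 - XZ (eps p.1 - eps p.2))) *
  (∏ p ∈ Finset.univ.filter (fun p : Fin m × Fin m => p.1 < p.2),
      (1 - XZ (-(eps p.1 + eps p.2))))

/-- `Φ_m = ∏_{1≤i<j≤m} (1 - x_i/x_j) · ∏_{1≤r≤s≤m} (1 - 1/(x_r x_s))`. -/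
def phiBig (m : ℕ) : LZ m :=
  (∏ p ∈ Finset.univ.filter (fun p : Fin m × Fin m => p.1 < p.2),
      (1 - XZ (eps p.1 - eps p.2))) *
  (∏ p ∈ Finset.univ.filter (fun p : Fin m × Fin m => p.1 ≤ p.2),
      (1 - XZ (-(eps p.1 + eps p.2))))

/-- The coefficient `a(γ)` of `x^γ` in `φ_m`. -/
def coeffSmall (m : ℕ) (γ : Wt m) : ℤ := (phiSmall m).coeff γ

/-- The coefficient `A(γ)` of `x^γ` in `Φ_m`. -/
def coeffBig (m : ℕ) (γ : Wt m) : ℤ := (phiBig m).coeff γ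

/-- The generic `q`-partition function attached to a finite family `v` of vectors:
the coefficient of `q^d` counts the families `(n_i)` of nonnegative integers with
`Σ n_i = d` and `Σ n_i v_i = β`.  This encodes the coefficient of `x^β` in the formal
series expansion of `∏_i (1 - q x^{v_i})^{-1}` as a power series in `q`. -/
def PqPS {m : ℕ} {ι : Type} [Fintype ι] (v : ι → Wt m) (β : QWt m) : PowerSeries ℤ :=
  PowerSeries.mk fun d =>
    (Nat.card {n : ι → ℕ // (∑ i, n i) = d ∧ castWt (∑ i, (n i : ℤ) • v i) = β} : ℤ)

/-- The specialization at `q = 1` of `PqPS`: the number of ways to write `β` as a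
nonnegative integral combination of the vectors `v_i`. -/
def POne {m : ℕ} {ι : Type} [Fintype ι] (v : ι → Wt m) (β : Wt m) : ℤ :=
  (Nat.card {n : ι → ℕ // (∑ i, (n i : ℤ) • v i) = β} : ℤ)

/-- Index type for the pairs `1 ≤ i < j ≤ m`. -/
abbrev IdxLT (m : ℕ) := {p : Fin m × Fin m // p.1 < p.2}

/-- Index type for the pairs `1 ≤ i ≤ j ≤ m`. -/
abbrev IdxLE (m : ℕ) := {p : Fin m × Fin m // p.1 ≤ p.2}

/-- The positive roots `ε_i - ε_j` (`i < j`) of type `A_m`. -/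
def rootsA (m : ℕ) : IdxLT m → Wt m := fun p => eps p.1.1 - eps p.1.2

/-- The positive roots of type `B_m`. -/
def rootsB (m : ℕ) : IdxLT m ⊕ IdxLT m ⊕ Fin m → Wt m
  | .inl p => eps p.1.1 - eps p.1.2
  | .inr (.inl p) => eps p.1.1 + eps p.1.2
  | .inr (.inr i) => eps i

/-- The positive roots of type `C_m` (note `2ε_i = ε_i + ε_i`). -/
def rootsC (m : ℕ) : IdxLT m ⊕ IdxLE m → Wt m
  | .inl p => eps p.1.1 - eps p.1.2
  | .inr p => eps p.1.1 + eps p.1.2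

/-- The positive roots of type `D_m`. -/
def rootsD (m : ℕ) : IdxLT m ⊕ IdxLT m → Wt m
  | .inl p => eps p.1.1 - eps p.1.2
  | .inr p => eps p.1.1 + eps p.1.2

/-- The vectors `ε_i - ε_j` (`i < j`) and `-(ε_r + ε_s)` (`r < s`), whose `q`-partition
function is `f_q`. -/
def vfSmall (m : ℕ) : IdxLT m ⊕ IdxLT m → Wt m
  | .inl p => eps p.1.1 - eps p.1.2
  | .inr p => -(eps p.1.1 + eps p.1.2)

/-- The vectors `ε_i - ε_j` (`i < j`) and `-(ε_r + ε_s)` (`r ≤ s`), whose `q`-partition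
function is `F_q`. -/
def vfBig (m : ℕ) : IdxLT m ⊕ IdxLE m → Wt m
  | .inl p => eps p.1.1 - eps p.1.2
  | .inr p => -(eps p.1.1 + eps p.1.2)

/-- `f_q`. -/
def fq {m : ℕ} (β : Wt m) : PowerSeries ℤ := PqPS (vfSmall m) (castWt β)

/-- `F_q`. -/
def Fq {m : ℕ} (β : Wt m) : PowerSeries ℤ := PqPS (vfBig m) (castWt β)

/-- The `q`-analogue of Kostant's partition function, type `A_m`. -/
def PqA {m : ℕ} (β : QWt m) : PowerSeries ℤ := PqPS (rootsA m) β

/-- The `q`-analogue of Kostant's partition function, types `B_m`, `C_m`, `D_m`. -/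
def PqG (g : RT) {m : ℕ} (β : QWt m) : PowerSeries ℤ :=
  match g with
  | RT.B => PqPS (rootsB m) β
  | RT.C => PqPS (rootsC m) β
  | RT.D => PqPS (rootsD m) β

/-- The Kostka–Foulkes polynomial
`K^g_{λ,μ}(q) = Σ_{w ∈ W_g} (-1)^{l(w)} P_q^g(w(λ+ρ_g) - (μ+ρ_g))`. -/
def KF (g : RT) {m : ℕ} (lam mu : QWt m) : PowerSeries ℤ :=
  ∑ σ : Equiv.Perm (Fin m), ∑ ε ∈ Finset.univ.filter (allowed g),
    ssign σ ε • PqG g (sact σ ε (lam + rhoG g m) - (mu + rhoG g m))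

/-- The Kostka–Foulkes polynomial of type `A_m`,
`K^{A_m}_{λ,γ}(q) = Σ_{σ ∈ S_m} (-1)^{l(σ)} P_q^{A_m}(σ(λ+ρ_m) - (γ+ρ_m))`,
defined for arbitrary `γ ∈ ℤ^m`. -/
def KFA {m : ℕ} (lam gamma : Wt m) : PowerSeries ℤ :=
  ∑ σ : Equiv.Perm (Fin m),
    (Equiv.Perm.sign σ : ℤ) • PqA (castWt (pact σ (lam + rhoZ m) - (gamma + rhoZ m)))

/-- `u_{λ,μ}(q) = Σ_{σ ∈ S_m} (-1)^{l(σ)} f_q(σ(λ+ρ_m) - μ - ρ_m)`. -/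
def uP {m : ℕ} (lam mu : Wt m) : PowerSeries ℤ :=
  ∑ σ : Equiv.Perm (Fin m),
    (Equiv.Perm.sign σ : ℤ) • fq (pact σ (lam + rhoZ m) - mu - rhoZ m)

/-- `U_{λ,μ}(q) = Σ_{σ ∈ S_m} (-1)^{l(σ)} F_q(σ(λ+ρ_m) - μ - ρ_m)`. -/
def UP {m : ℕ} (lam mu : Wt m) : PowerSeries ℤ :=
  ∑ σ : Equiv.Perm (Fin m),
    (Equiv.Perm.sign σ : ℤ) • Fq (pact σ (lam + rhoZ m) - mu - rhoZ m)

/-- `f_q` specialized at `q = 1`. -/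
def fOne {m : ℕ} (β : Wt m) : ℤ := POne (vfSmall m) β

/-- `F_q` specialized at `q = 1`. -/
def FOne {m : ℕ} (β : Wt m) : ℤ := POne (vfBig m) β

/-- `u_{λ,μ}(1)`. -/
def uP1 {m : ℕ} (lam mu : Wt m) : ℤ :=
  ∑ σ : Equiv.Perm (Fin m),
    (Equiv.Perm.sign σ : ℤ) * fOne (pact σ (lam + rhoZ m) - mu - rhoZ m)

/-- `U_{λ,μ}(1)`. -/
def UP1 {m : ℕ} (lam mu : Wt m) : ℤ :=
  ∑ σ : Equiv.Perm (Fin m),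
    (Equiv.Perm.sign σ : ℤ) * FOne (pact σ (lam + rhoZ m) - mu - rhoZ m)

/-- `λ̂ = (n - λ_m, …, n - λ_1)`. -/
def hatP {m : ℕ} (n : ℤ) (lam : Wt m) : Wt m := fun i => n - lam i.rev

/-- The involution `I(α_1, …, α_m) = (-α_m, …, -α_1)`. -/
def invI {m : ℕ} (α : Wt m) : Wt m := fun i => -α i.rev

/-- `σ*`, defined by `σ*(k) = σ(m - k + 1)`. -/
def starPerm {m : ℕ} (σ : Equiv.Perm (Fin m)) : Equiv.Perm (Fin m) :=
  (Fin.revPerm).trans σ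

/-- The number of ways to write `β = Σ_{1≤r≤s≤m} e_{r,s} (ε_r + ε_s)`, `e_{r,s} ∈ ℕ`. -/
def cC (m : ℕ) (β : Wt m) : ℕ :=
  Nat.card {e : IdxLE m → ℕ // (∑ p, (e p : ℤ) • (eps p.1.1 + eps p.1.2)) = β}

/-- The number of ways to write `β = Σ_{1≤r<s≤m} e_{r,s} (ε_r + ε_s)`, `e_{r,s} ∈ ℕ`. -/
def cD (m : ℕ) (β : Wt m) : ℕ :=
  Nat.card {e : IdxLT m → ℕ // (∑ p, (e p : ℤ) • (eps p.1.1 + eps p.1.2)) = β}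

/-- The set `C_k^m`. -/
def setC (m k : ℕ) : Set (Wt m) :=
  {β | (∃ e : IdxLE m → ℕ, (∑ p, (e p : ℤ) • (eps p.1.1 + eps p.1.2)) = β) ∧
       wtSum β = 2 * k}

/-- The set `D_k^m`. -/
def setD (m k : ℕ) : Set (Wt m) :=
  {β | (∃ e : IdxLT m → ℕ, (∑ p, (e p : ℤ) • (eps p.1.1 + eps p.1.2)) = β) ∧
       wtSum β = 2 * k}

/-! Every positive root of type `B`, `C` or `D` has nonnegative coordinate sum, so
`P_q^g(β)` vanishes as soon as the coordinates of `β` sum to a negative number. A signed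
permutation `w = (σ, ε)` with flipped set `T ≠ ∅` lowers the coordinate sum of
`λ + kκ_m + ρ_g` by twice `Σ_{j∈T} (λ_j + k + ρ_g j) > k`, while `|λ| - |μ| ≤ 2k`; so
only the terms with `ε` trivial, i.e. `w ∈ S_m`, survive. -/

lemma PqPS_eq_zero_of_sum_neg {m : ℕ} {ι : Type} [Fintype ι] (v : ι → Wt m) (β : QWt m)
    (hv : ∀ i, 0 ≤ ∑ j, v i j) (hβ : ∑ j, β j < 0) : PqPS v β = 0 := by
  ext d
  rw [PqPS, PowerSeries.coeff_mk, map_zero, Nat.cast_eq_zero, Nat.card_eq_zero]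
  refine Or.inl ⟨fun ⟨n, _, hn⟩ => hβ.not_ge ?_⟩
  have hsum : ∑ j, β j = ∑ i, ((n i : ℤ) * ∑ j, v i j : ℤ) := by
    simp only [← hn, castWt, Finset.sum_apply, Pi.smul_apply, smul_eq_mul, Finset.mul_sum]
    push_cast
    exact Finset.sum_comm
  rw [hsum]
  exact_mod_cast Finset.sum_nonneg fun i _ => mul_nonneg (Nat.cast_nonneg _) (hv i)

lemma sum_eps {m : ℕ} (i : Fin m) : ∑ j, eps i j = 1 := by
  simp [eps]

lemma PqG_eq_zero_of_sum_neg (g : RT) {m : ℕ} (β : QWt m) (hβ : ∑ j, β j < 0) :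
    PqG g β = 0 := by
  have hA (i j : Fin m) : 0 ≤ ∑ l, (eps i - eps j) l := by
    simp [Finset.sum_sub_distrib, sum_eps]
  have hP (i j : Fin m) : 0 ≤ ∑ l, (eps i + eps j) l := by
    simp [Finset.sum_add_distrib, sum_eps]
  cases g
  · refine PqPS_eq_zero_of_sum_neg _ _ ?_ hβ
    rintro (p | p | i)
    exacts [hA _ _, hP _ _, by simp [rootsB, sum_eps]]
  · exact PqPS_eq_zero_of_sum_neg _ _ (by rintro (p | p); exacts [hA _ _, hP _ _]) hβ
  · exact PqPS_eq_zero_of_sum_neg _ _ (by rintro (p | p); exacts [hA _ _, hP _ _]) hβ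

lemma rhoG_nonneg (g : RT) {m : ℕ} (j : Fin m) : 0 ≤ rhoG g m j := by
  have hj : ((j : ℕ) : ℚ) + 1 ≤ m := by exact_mod_cast j.isLt
  cases g <;> simp only [rhoG] <;> linarith

lemma rhoG_pos_of_lt (g : RT) {m : ℕ} (j : Fin m) (hj : (j : ℕ) + 1 < m) :
    0 < rhoG g m j := by
  have : ((j : ℕ) : ℚ) + 2 ≤ m := by exact_mod_cast hj
  cases g <;> simp only [rhoG] <;> linarith

lemma rhoG_pos_of_ne_D (g : RT) {m : ℕ} (j : Fin m) (hg : g ≠ RT.D) : 0 < rhoG g m j := by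
  have : ((j : ℕ) : ℚ) + 1 ≤ m := by exact_mod_cast j.isLt
  cases g
  · simp only [rhoG]; linarith
  · simp only [rhoG]; linarith
  · exact absurd rfl hg

/-- In type `D` only even sets of coordinates can be flipped, so `T` contains two distinct
indices, at most one of which is the last one, where `ρ_D` vanishes. -/
lemma sum_rhoG_pos (g : RT) {m : ℕ} (T : Finset (Fin m)) (hT : T.Nonempty)
    (hD : g = RT.D → Even T.card) : 0 < ∑ j ∈ T, rhoG g m j := by
  refine Finset.sum_pos' (fun j _ => rhoG_nonneg g j) ?_
  by_cases hg : g = RT.D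
  · have hcard : 1 < T.card := by
      obtain ⟨r, hr⟩ := hD hg
      have := hT.card_pos
      omega
    obtain ⟨a, ha, b, hb, hab⟩ := Finset.one_lt_card.mp hcard
    have hab' : (a : ℕ) ≠ b := Fin.val_ne_of_ne hab
    by_cases ha' : (a : ℕ) + 1 < m
    · exact ⟨a, ha, rhoG_pos_of_lt g a ha'⟩
    · exact ⟨b, hb, rhoG_pos_of_lt g b (by omega)⟩
  · obtain ⟨j, hj⟩ := hT
    exact ⟨j, hj, rhoG_pos_of_ne_D g j hg⟩

lemma sum_sact {m : ℕ} (σ : Equiv.Perm (Fin m)) (ε : Fin m → Bool) (ν : QWt m) :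
    ∑ i, sact σ ε ν i =
      ∑ j, ν j - 2 * ∑ j ∈ Finset.univ.filter (fun j => ε (σ j)), ν j := by
  rw [← Equiv.sum_comp σ, Finset.mul_sum, Finset.sum_filter, ← Finset.sum_sub_distrib]
  refine Finset.sum_congr rfl fun j _ => ?_
  cases h : ε (σ j)
  · simp [sact, h]
  · simp [sact, h]; ring

lemma prod_signs_eq_neg_one_pow {m : ℕ} (ε : Fin m → Bool) :
    ∏ i, (if ε i then (-1 : ℤ) else 1) = (-1) ^ (Finset.univ.filter fun i => ε i).card := by
  rw [Finset.prod_ite, Finset.prod_const, Finset.prod_const_one, mul_one]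

lemma even_card_flipped_of_allowed_D {m : ℕ} (σ : Equiv.Perm (Fin m)) (ε : Fin m → Bool)
    (hε : allowed RT.D ε) : Even (Finset.univ.filter fun j => ε (σ j)).card := by
  have h := hε rfl
  rw [← Equiv.prod_comp σ, prod_signs_eq_neg_one_pow] at h
  exact (neg_one_pow_eq_one_iff_even (by decide)).mp h

lemma sum_sact_shift_sub_neg (g : RT) {m : ℕ} (lam mu : Wt m) (hlam : ∀ i, 0 ≤ lam i)
    (k : ℤ) (hk0 : 0 ≤ k) (hk : wtSum lam - wtSum mu ≤ 2 * k)
    (σ : Equiv.Perm (Fin m)) (ε : Fin m → Bool) (hε : allowed g ε)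
    (hne : ε ≠ fun _ => false) :
    ∑ i, (sact σ ε (castWt (lam + k • kappa m) + rhoG g m)
      - (castWt (mu + k • kappa m) + rhoG g m)) i < 0 := by
  set T := Finset.univ.filter fun j => ε (σ j)
  have hT : T.Nonempty := by
    obtain ⟨i, hi⟩ := Function.ne_iff.mp hne
    exact ⟨σ.symm i, by simpa [T] using hi⟩
  have hρ : 0 < ∑ j ∈ T, rhoG g m j :=
    sum_rhoG_pos g T hT fun hg => by subst hg; exact even_card_flipped_of_allowed_D σ ε hε
  have hνT : ∑ j ∈ T, (castWt (lam + k • kappa m) + rhoG g m) j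
      = ∑ j ∈ T, (lam j : ℚ) + T.card * k + ∑ j ∈ T, rhoG g m j := by
    simp [castWt, kappa, Finset.sum_add_distrib]
  have hdiff : ∑ j, (castWt (lam + k • kappa m) + rhoG g m) j
      - ∑ j, (castWt (mu + k • kappa m) + rhoG g m) j
      = ((wtSum lam - wtSum mu : ℤ) : ℚ) := by
    simp [castWt, kappa, wtSum, Finset.sum_add_distrib]
  have hlamT : 0 ≤ ∑ j ∈ T, (lam j : ℚ) :=
    Finset.sum_nonneg fun j _ => by exact_mod_cast hlam j
  have hkT : (k : ℚ) ≤ T.card * k := by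
    have : (1 : ℚ) ≤ T.card := by exact_mod_cast hT.card_pos
    nlinarith [(by exact_mod_cast hk0 : (0 : ℚ) ≤ k)]
  have hkq : ((wtSum lam - wtSum mu : ℤ) : ℚ) ≤ 2 * k := by exact_mod_cast hk
  simp only [Pi.sub_apply]
  rw [Finset.sum_sub_distrib, sum_sact, hνT]
  linarith

lemma sact_false {m : ℕ} (σ : Equiv.Perm (Fin m)) (ν : QWt m) :
    sact σ (fun _ => false) ν = qpact σ ν := by
  ext i
  simp [sact, qpact]

lemma ssign_false {m : ℕ} (σ : Equiv.Perm (Fin m)) :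
    ssign σ (fun _ => false) = Equiv.Perm.sign σ := by
  simp [ssign]

theorem stmt11_general (m : ℕ) (lam mu : Wt m) (hlam : IsPart lam)
    (hsz : wtSum mu ≤ wtSum lam) (k : ℤ) (hk : wtSum lam - wtSum mu ≤ 2 * k) (g : RT) :
    KF g (castWt (lam + k • kappa m)) (castWt (mu + k • kappa m)) =
      ∑ σ : Equiv.Perm (Fin m),
        (Equiv.Perm.sign σ : ℤ) •
          PqG g (qpact σ (castWt lam + rhoG g m) - (castWt mu + rhoG g m)) := by
  refine Finset.sum_congr rfl fun σ _ => ?_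
  rw [Finset.sum_eq_single_of_mem (fun _ => false) (by simp [allowed])]
  · have hshift : qpact σ (castWt (lam + k • kappa m) + rhoG g m)
        - (castWt (mu + k • kappa m) + rhoG g m)
        = qpact σ (castWt lam + rhoG g m) - (castWt mu + rhoG g m) := by
      ext i
      simp only [qpact, castWt, kappa, Function.comp_apply, Pi.add_apply, Pi.sub_apply,
        Pi.smul_apply, smul_eq_mul]
      push_cast
      ring
    rw [ssign_false, sact_false, hshift]
  · intro ε hε hne
    have hneg := sum_sact_shift_sub_neg g lam mu hlam.2 k (by linarith) hk σ ε
      (Finset.mem_filter.mp hε).2 hne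
    rw [PqG_eq_zero_of_sum_neg g _ hneg, smul_zero]

/-- If `|λ| ≥ |μ|` and `k ≥ (|λ|-|μ|)/2`, then for each
`g ∈ {B_m, C_m, D_m}` the sum defining `K^g_{λ+kκ_m, μ+kκ_m}(q)` can be restricted
from `W_g` to `S_m`:
`K^g_{λ+kκ_m, μ+kκ_m}(q) = Σ_{σ∈S_m} (-1)^{l(σ)} P_q^g(σ(λ+ρ_g) - (μ+ρ_g))`. -/
theorem stmt11 (m : ℕ) (hm : 1 ≤ m) (lam mu : Wt m) (hlam : IsPart lam) (hmu : IsPart mu)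
    (hsz : wtSum mu ≤ wtSum lam) (k : ℤ) (hk : wtSum lam - wtSum mu ≤ 2 * k) (g : RT) :
    KF g (castWt (lam + k • kappa m)) (castWt (mu + k • kappa m)) =
      ∑ σ : Equiv.Perm (Fin m),
        (Equiv.Perm.sign σ : ℤ) •
          PqG g (qpact σ (castWt lam + rhoG g m) - (castWt mu + rhoG g m)) :=
  stmt11_general m lam mu hlam hsz k hk g

end
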